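/- Let d ≥ 5 be odd and let R = {v ∈ ℤ^d : v₁² + ⋯ + v_d² = 2} be the set of roots of the root lattice D_d. Then any subset of R whose elements are pairwise orthogonal has cardinality at most d − 1; in particular, R contains no d pairwise orthogonal vectors, so the roots of D_d contain no 2-frame when d is odd. -/

import Mathlib

/-!
Take `d` pairwise orthogonal roots and let `M` be the `d × d` integer matrix having them as
rows. Then `M * Mᵀ = 2 • 1`, so `(det M) ^ 2 = 2 ^ d`; comparing the exponents of `2` on both
sides forces `d` to be even.
-/

open Matrix

theorem Int.even_of_sq_eq_prime_pow {p : ℕ} (hp : p.Prime) {x : ℤ} {d : ℕ}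
    (h : x ^ 2 = (p : ℤ) ^ d) : Even d := by
  have hnat : x.natAbs ^ 2 = p ^ d := by
    simpa [Int.natAbs_pow] using congrArg Int.natAbs h
  have hexp := congrArg (fun n => n.factorization p) hnat
  simp only [Nat.factorization_pow, hp.factorization_self, Finsupp.smul_apply, smul_eq_mul,
    mul_one] at hexp
  exact ⟨x.natAbs.factorization p, by omega⟩

theorem Matrix.det_sq_of_mul_transpose_eq_smul_one {R n : Type*} [CommRing R] [Fintype n]
    [DecidableEq n] {M : Matrix n n R} {c : R} (h : M * Mᵀ = c • 1) :
    M.det ^ 2 = c ^ Fintype.card n := by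
  simpa [det_mul, det_transpose, det_smul, sq] using congrArg det h

theorem Matrix.even_card_of_mul_transpose_eq_two_smul_one {m n : Type*} [Fintype m] [Fintype n]
    [DecidableEq m] {M : Matrix m n ℤ} (hcard : Fintype.card m = Fintype.card n)
    (h : M * Mᵀ = (2 : ℤ) • 1) : Even (Fintype.card n) := by
  let e : m ≃ n := Fintype.equivOfCardEq hcard
  have hsq : (M.submatrix id e).det ^ 2 = 2 ^ Fintype.card m := by
    apply det_sq_of_mul_transpose_eq_smul_one
    rw [transpose_submatrix, submatrix_mul_transpose_submatrix, h]
  exact hcard ▸ Int.even_of_sq_eq_prime_pow Nat.prime_two (by exact_mod_cast hsq)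

theorem stmt11 (d : ℕ) (hodd : Odd d) :
    ∀ S : Finset (Fin d → ℤ),
      (∀ v ∈ S, ∑ t, (v t) ^ 2 = 2) →
      (∀ v ∈ S, ∀ w ∈ S, v ≠ w → ∑ t, v t * w t = 0) →
      S.card ≤ d - 1 := by
  intro S hnorm horth
  by_contra! hcard
  obtain ⟨T, hTS, hT⟩ := Finset.exists_subset_card_eq (show d ≤ S.card by omega)
  let M : Matrix T (Fin d) ℤ := Matrix.of fun v t => (v : Fin d → ℤ) t
  have hgram : M * Mᵀ = (2 : ℤ) • 1 := by
    ext v w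
    simp only [M, mul_apply, transpose_apply, of_apply, Matrix.smul_apply, Matrix.one_apply,
      smul_eq_mul]
    split_ifs with hvw
    · simpa [hvw, sq] using hnorm w (hTS w.2)
    · simpa using horth v (hTS v.2) w (hTS w.2) (Subtype.coe_ne_coe.mpr hvw)
  have heven := even_card_of_mul_transpose_eq_two_smul_one (by simpa using hT) hgram
  exact Nat.not_even_iff_odd.mpr hodd (by simpa using heven)
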